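/- Correctness of the counting recurrence: let G be a CNF hyperedge replacement grammar and for A ∈ N and ℓ ≥ 1 let D_A(ℓ) denote the number of ordered derivation trees t with root label A such that |yield(t)| = ℓ + type(A). Then D_A(ℓ) = Σ_{p ∈ P^A} D_p(ℓ), where for a terminal production p = (A → a, i), D_p(ℓ) = 1 if ℓ = i + 1 and 0 otherwise; for an empty-rhs production p = (A → λ, i), D_p(ℓ) = 1 if ℓ = i and 0 otherwise; and for a non-terminal production p = (A → BC, i), D_p(ℓ) = Σ_{0 < k < ℓ − i} D_B(k) · D_C(ℓ − i − k). -/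
import Mathlib


/-- Short-hand productions of a CNF hyperedge replacement grammar, as in the
paper: `nt A B C i` stands for `A ⟶ BC, i`, `tm A a i` for `A ⟶ a, i`, and
`eps A i` for `A ⟶ λ, i`, where `i` is the number of internal (non-external)
nodes of the right-hand side.  The tag `id` distinguishes different productions
with the same short-hand data. -/
inductive GProd (Nt T : Type) where
  | nt (id : ℕ) (A B C : Nt) (i : ℕ)
  | tm (id : ℕ) (A : Nt) (a : T) (i : ℕ)
  | eps (id : ℕ) (A : Nt) (i : ℕ)
deriving DecidableEq

/-- The left-hand side of a short-hand production. -/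
def GProd.lhs {Nt T : Type} : GProd Nt T → Nt
  | .nt _ A _ _ _ => A
  | .tm _ A _ _ => A
  | .eps _ A _ => A

/-- Ordered derivation trees of a CNF hyperedge replacement grammar with
production set `P`: each node is labelled by a production applicable to its
root non-terminal, with one subtree per non-terminal hyperedge of its
right-hand side (in the marked order `α`, `β`). -/
inductive DTree {Nt T : Type} (P : Finset (GProd Nt T)) : Nt → Type where
  | node (id : ℕ) (A B C : Nt) (i : ℕ) (h : GProd.nt id A B C i ∈ P)
      (t₁ : DTree P B) (t₂ : DTree P C) : DTree P A
  | leafT (id : ℕ) (A : Nt) (a : T) (i : ℕ) (h : GProd.tm id A a i ∈ P) : DTree P A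
  | leafE (id : ℕ) (A : Nt) (i : ℕ) (h : GProd.eps id A i ∈ P) : DTree P A

namespace DTree

variable {Nt T : Type} {P : Finset (GProd Nt T)} {A : Nt}

/-- The size contribution `ℓ` of the yield of a derivation tree, so that
`|yield t| = sz t + type A` for a tree `t` with root label `A`: a terminal
production contributes its `i` internal nodes plus one terminal hyperedge, an
empty production its `i` internal nodes, and a non-terminal production its `i`
internal nodes plus the contributions of its two subtrees. -/
def sz : ∀ {A : Nt}, DTree P A → ℕ
  | _, node _ _ _ _ i _ t₁ t₂ => i + t₁.sz + t₂.sz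
  | _, leafT _ _ _ i _ => i + 1
  | _, leafE _ _ i _ => i

/-- The production applied at the root of a derivation tree. -/
def rootP : ∀ {A : Nt}, DTree P A → GProd Nt T
  | _, node id A B C i _ _ _ => GProd.nt id A B C i
  | _, leafT id A a i _ => GProd.tm id A a i
  | _, leafE id A i _ => GProd.eps id A i

/-- The number of nodes of a derivation tree, i.e. the number of productions
applied in the corresponding derivation. -/
def nodes : ∀ {A : Nt}, DTree P A → ℕ
  | _, node _ _ _ _ _ _ t₁ t₂ => 1 + t₁.nodes + t₂.nodes
  | _, leafT _ _ _ _ _ => 1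
  | _, leafE _ _ _ _ => 1

end DTree

/-- `D P A ℓ`: the number of ordered derivation trees with root label `A`
whose yield has size `ℓ + type A`. -/
noncomputable def D {Nt T : Type} (P : Finset (GProd Nt T)) (A : Nt) (ℓ : ℕ) : ℕ :=
  Nat.card {t : DTree P A // t.sz = ℓ}

/-- `Dp P A p ℓ`: the number of such trees whose root production is `p`. -/
noncomputable def Dp {Nt T : Type} (P : Finset (GProd Nt T)) (A : Nt)
    (p : GProd Nt T) (ℓ : ℕ) : ℕ :=
  Nat.card {t : DTree P A // t.rootP = p ∧ t.sz = ℓ}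


section Aux

open DTree

variable {Nt T : Type} {P : Finset (GProd Nt T)}

/-- Preorder traversal of a derivation tree, recording the production applied
at each node (with its membership proof in `P`). -/
def preP : ∀ {A : Nt}, DTree P A → List {p : GProd Nt T // p ∈ P}
  | _, .node id A B C i h t₁ t₂ => ⟨.nt id A B C i, h⟩ :: (preP t₁ ++ preP t₂)
  | _, .leafT id A a i h => [⟨.tm id A a i, h⟩]
  | _, .leafE id A i h => [⟨.eps id A i, h⟩]

lemma preP_append_inj : ∀ {A : Nt} (t t' : DTree P A)
    (l l' : List {p : GProd Nt T // p ∈ P}),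
    preP t ++ l = preP t' ++ l' → t = t' ∧ l = l' := by
  intro A t
  induction t with
  | node id A B C i h t₁ t₂ ih₁ ih₂ =>
    intro t' l l' heq
    cases t' with
    | node id' A B' C' i' h' t₁' t₂' =>
      simp only [preP, List.cons_append, List.cons.injEq, Subtype.mk.injEq,
        GProd.nt.injEq, true_and, and_true] at heq
      obtain ⟨⟨rfl, rfl, rfl, rfl⟩, heq⟩ := heq
      rw [List.append_assoc, List.append_assoc] at heq
      obtain ⟨e1, e2⟩ := ih₁ _ _ _ heq
      obtain ⟨e3, e4⟩ := ih₂ _ _ _ e2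
      subst e1; subst e3; subst e4
      exact ⟨rfl, rfl⟩
    | leafT id' A a' i' h' => simp [preP] at heq
    | leafE id' A i' h' => simp [preP] at heq
  | leafT id A a i h =>
    intro t' l l' heq
    cases t' with
    | node id' A B' C' i' h' t₁' t₂' => simp [preP] at heq
    | leafT id' A a' i' h' =>
      simp only [preP, List.cons_append, List.nil_append, List.cons.injEq,
        Subtype.mk.injEq, GProd.tm.injEq, true_and, and_true] at heq
      obtain ⟨⟨rfl, rfl, rfl⟩, rfl⟩ := heq
      exact ⟨rfl, rfl⟩
    | leafE id' A i' h' => simp [preP] at heq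
  | leafE id A i h =>
    intro t' l l' heq
    cases t' with
    | node id' A B' C' i' h' t₁' t₂' => simp [preP] at heq
    | leafT id' A a' i' h' => simp [preP] at heq
    | leafE id' A i' h' =>
      simp only [preP, List.cons_append, List.nil_append, List.cons.injEq,
        Subtype.mk.injEq, GProd.eps.injEq, true_and, and_true] at heq
      obtain ⟨⟨rfl, rfl⟩, rfl⟩ := heq
      exact ⟨rfl, rfl⟩

lemma one_le_sz (heps : ∀ id A i, GProd.eps id A i ∈ P → 1 ≤ i) :
    ∀ {A : Nt} (t : DTree P A), 1 ≤ t.sz := by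
  intro A t
  induction t with
  | node id A B C i h t₁ t₂ ih₁ ih₂ => simp only [sz]; omega
  | leafT id A a i h => simp [sz]
  | leafE id A i h => exact heps id A i h

lemma length_preP (heps : ∀ id A i, GProd.eps id A i ∈ P → 1 ≤ i) :
    ∀ {A : Nt} (t : DTree P A), (preP t).length + 1 ≤ 2 * t.sz := by
  intro A t
  induction t with
  | node id A B C i h t₁ t₂ ih₁ ih₂ =>
    simp only [preP, sz, List.length_cons, List.length_append] at *
    omega
  | leafT id A a i h => simp [preP, sz]
  | leafE id A i h =>
    have := heps id A i h
    simp only [preP, sz, List.length_cons, List.length_nil]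
    omega

lemma finite_sz (heps : ∀ id A i, GProd.eps id A i ∈ P → 1 ≤ i) (A : Nt) (ℓ : ℕ) :
    Finite {t : DTree P A // t.sz = ℓ} := by
  have hinj : Function.Injective (fun t : {t : DTree P A // t.sz = ℓ} =>
      fun i : Fin (2 * ℓ) => (preP t.1)[(i : ℕ)]?) := by
    intro t t' h
    have hl : preP t.1 = preP t'.1 := by
      apply List.ext_getElem?
      intro i
      by_cases hi : i < 2 * ℓ
      · exact congrFun h ⟨i, hi⟩
      · have h1 := length_preP heps t.1
        have h2 := length_preP heps t'.1
        rw [t.2] at h1; rw [t'.2] at h2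
        rw [List.getElem?_eq_none (by omega), List.getElem?_eq_none (by omega)]
    have := preP_append_inj t.1 t'.1 [] [] (by simpa using hl)
    exact Subtype.ext this.1
  exact Finite.of_injective _ hinj

lemma finite_root (heps : ∀ id A i, GProd.eps id A i ∈ P → 1 ≤ i) (A : Nt) (ℓ : ℕ)
    (p : GProd Nt T) : Finite {t : DTree P A // t.rootP = p ∧ t.sz = ℓ} := by
  haveI := finite_sz (P := P) heps A ℓ
  apply Finite.of_injective
    (fun t : {t : DTree P A // t.rootP = p ∧ t.sz = ℓ} =>
      (⟨t.1, t.2.2⟩ : {t : DTree P A // t.sz = ℓ}))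
  intro a b h
  simp only [Subtype.mk.injEq] at h
  exact Subtype.ext h

lemma rootP_mem {A : Nt} (t : DTree P A) : t.rootP ∈ P := by
  cases t with
  | node id A B C i h t₁ t₂ => exact h
  | leafT id A a i h => exact h
  | leafE id A i h => exact h

lemma rootP_lhs {A : Nt} (t : DTree P A) : t.rootP.lhs = A := by
  cases t <;> rfl

lemma nat_card_sigma {ι : Type} (s : Finset ι) (f : ι → Type) [∀ i, Finite (f i)] :
    Nat.card (Σ i : {i // i ∈ s}, f i.1) = ∑ i ∈ s, Nat.card (f i) := by
  classical
  letI : ∀ i : {i // i ∈ s}, Fintype (f i.1) := fun i => Fintype.ofFinite _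
  rw [Nat.card_eq_fintype_card, Fintype.card_sigma,
    ← Finset.sum_coe_sort s (fun i => Nat.card (f i))]
  exact Finset.sum_congr rfl fun i _ => (Nat.card_eq_fintype_card).symm

/-- Splitting the trees of a given size according to their root production. -/
def rootEquiv [DecidableEq Nt] [DecidableEq T] (A : Nt) (ℓ : ℕ) :
    {t : DTree P A // t.sz = ℓ} ≃
      Σ p : {p // p ∈ P.filter (fun p => p.lhs = A)},
        {t : DTree P A // t.rootP = p.1 ∧ t.sz = ℓ} where
  toFun t := ⟨⟨t.1.rootP, Finset.mem_filter.mpr ⟨rootP_mem t.1, rootP_lhs t.1⟩⟩,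
    t.1, rfl, t.2⟩
  invFun x := ⟨x.2.1, x.2.2.2⟩
  left_inv t := rfl
  right_inv := by
    rintro ⟨⟨p, hp⟩, ⟨t, ht, ht2⟩⟩
    have h3 : t.rootP = p := ht
    subst h3
    rfl

end Aux

/-- Correctness of the counting recurrence for a CNF
hyperedge replacement grammar (in short-hand form; the CNF condition guarantees
that empty-rhs productions have at least one internal node):
`D_A(ℓ) = Σ_{p ∈ P^A} D_p(ℓ)` for all `ℓ ≥ 1`, where for a terminal production
`p = (A → a, i)` we have `D_p(ℓ) = 1` iff `ℓ = i + 1`, for an empty-rhs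
production `p = (A → λ, i)` we have `D_p(ℓ) = 1` iff `ℓ = i`, and for a
non-terminal production `p = (A → BC, i)` we have
`D_p(ℓ) = Σ_{0 < k < ℓ − i} D_B(k)·D_C(ℓ − i − k)`. -/
theorem counting_recurrence {Nt T : Type} [DecidableEq Nt] [DecidableEq T]
    (P : Finset (GProd Nt T))
    (heps : ∀ id A i, GProd.eps id A i ∈ P → 1 ≤ i) :
    (∀ (A : Nt) (ℓ : ℕ), 1 ≤ ℓ →
      D P A ℓ = ∑ p ∈ P.filter (fun p => p.lhs = A), Dp P A p ℓ) ∧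
    (∀ (id : ℕ) (A : Nt) (a : T) (i ℓ : ℕ), GProd.tm id A a i ∈ P →
      Dp P A (GProd.tm id A a i) ℓ = if ℓ = i + 1 then 1 else 0) ∧
    (∀ (id : ℕ) (A : Nt) (i ℓ : ℕ), GProd.eps id A i ∈ P →
      Dp P A (GProd.eps id A i) ℓ = if ℓ = i then 1 else 0) ∧
    (∀ (id : ℕ) (A B C : Nt) (i ℓ : ℕ), GProd.nt id A B C i ∈ P →
      Dp P A (GProd.nt id A B C i) ℓ =
        ∑ k ∈ Finset.Ioo 0 (ℓ - i), D P B k * D P C (ℓ - i - k)) := by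
  classical
  refine ⟨?_, ?_, ?_, ?_⟩
  · -- recurrence over productions
    intro A ℓ _
    haveI : ∀ p : GProd Nt T, Finite {t : DTree P A // t.rootP = p ∧ t.sz = ℓ} :=
      fun p => finite_root heps A ℓ p
    rw [D, Nat.card_congr (rootEquiv A ℓ),
      nat_card_sigma (P.filter (fun p => p.lhs = A))
        (fun p => {t : DTree P A // t.rootP = p ∧ t.sz = ℓ})]
    rfl
  · -- terminal productions
    intro id A a i ℓ hP
    unfold Dp
    by_cases hℓ : ℓ = i + 1
    · subst hℓ
      rw [if_pos rfl]
      haveI : Unique {t : DTree P A // t.rootP = GProd.tm id A a i ∧ t.sz = i + 1} := by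
        refine ⟨⟨⟨.leafT id A a i hP, rfl, rfl⟩⟩, ?_⟩
        rintro ⟨t, ht, hs⟩
        cases t with
        | node id' A B' C' i' h' t₁ t₂ => simp [DTree.rootP] at ht
        | leafT id' A a' i' h' =>
          simp only [DTree.rootP] at ht
          injection ht with e1 e2 e3 e4
          try subst e1
          try subst e3
          try subst e4
          rfl
        | leafE id' A i' h' => simp [DTree.rootP] at ht
      exact Nat.card_unique
    · rw [if_neg hℓ]
      haveI : IsEmpty {t : DTree P A // t.rootP = GProd.tm id A a i ∧ t.sz = ℓ} := by
        refine ⟨?_⟩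
        rintro ⟨t, ht, hs⟩
        cases t with
        | node id' A B' C' i' h' t₁ t₂ => simp [DTree.rootP] at ht
        | leafT id' A a' i' h' =>
          simp only [DTree.rootP] at ht
          injection ht with e1 e2 e3 e4
          try subst e1
          try subst e3
          try subst e4
          simp only [DTree.sz] at hs
          exact hℓ hs.symm
        | leafE id' A i' h' => simp [DTree.rootP] at ht
      exact Nat.card_of_isEmpty
  · -- empty-rhs productions
    intro id A i ℓ hP
    unfold Dp
    by_cases hℓ : ℓ = i
    · subst hℓ
      rw [if_pos rfl]
      haveI : Unique {t : DTree P A // t.rootP = GProd.eps id A ℓ ∧ t.sz = ℓ} := by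
        refine ⟨⟨⟨.leafE id A ℓ hP, rfl, rfl⟩⟩, ?_⟩
        rintro ⟨t, ht, hs⟩
        cases t with
        | node id' A B' C' i' h' t₁ t₂ => simp [DTree.rootP] at ht
        | leafT id' A a' i' h' => simp [DTree.rootP] at ht
        | leafE id' A i' h' =>
          simp only [DTree.rootP] at ht
          injection ht with e1 e2 e3
          try subst e1
          try subst e3
          rfl
      exact Nat.card_unique
    · rw [if_neg hℓ]
      haveI : IsEmpty {t : DTree P A // t.rootP = GProd.eps id A i ∧ t.sz = ℓ} := by
        refine ⟨?_⟩
        rintro ⟨t, ht, hs⟩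
        cases t with
        | node id' A B' C' i' h' t₁ t₂ => simp [DTree.rootP] at ht
        | leafT id' A a' i' h' => simp [DTree.rootP] at ht
        | leafE id' A i' h' =>
          simp only [DTree.rootP] at ht
          injection ht with e1 e2 e3
          try subst e1
          try subst e3
          simp only [DTree.sz] at hs
          exact hℓ hs.symm
      exact Nat.card_of_isEmpty
  · -- non-terminal productions
    intro id A B C i ℓ hP
    haveI : ∀ k : ℕ, Finite {t : DTree P B // t.sz = k} := fun k => finite_sz heps B k
    haveI : ∀ k : ℕ, Finite {t : DTree P C // t.sz = k} := fun k => finite_sz heps C k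
    let g : (Σ k : {k // k ∈ Finset.Ioo 0 (ℓ - i)},
          {t : DTree P B // t.sz = k.1} × {t : DTree P C // t.sz = ℓ - i - k.1}) →
        {t : DTree P A // t.rootP = GProd.nt id A B C i ∧ t.sz = ℓ} :=
      fun x => ⟨.node id A B C i hP x.2.1.1 x.2.2.1, rfl, by
        have hk := Finset.mem_Ioo.mp x.1.2
        have h1 := x.2.1.2
        have h2 := x.2.2.2
        simp only [DTree.sz]
        omega⟩
    have hg : Function.Bijective g := by
      constructor
      · rintro ⟨⟨k, hk⟩, ⟨t₁, h1⟩, ⟨t₂, h2⟩⟩ ⟨⟨k', hk'⟩, ⟨t₁', h1'⟩, ⟨t₂', h2'⟩⟩ h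
        simp only [g, Subtype.mk.injEq, DTree.node.injEq, heq_eq_eq, true_and] at h
        obtain ⟨ht1, ht2⟩ := h
        subst ht1
        subst ht2
        have hkk : k = k' := h1.symm.trans h1'
        subst hkk
        rfl
      · rintro ⟨t, ht, hs⟩
        cases t with
        | node id' A B' C' i' h' t₁ t₂ =>
          simp only [DTree.rootP] at ht
          injection ht with e1 e2 e3 e4 e5
          try subst e1
          try subst e3
          try subst e4
          try subst e5
          simp only [DTree.sz] at hs
          have h1 := one_le_sz heps t₁
          have h2 := one_le_sz heps t₂
          refine ⟨⟨⟨t₁.sz, Finset.mem_Ioo.mpr ⟨by omega, by omega⟩⟩,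
            ⟨t₁, rfl⟩, ⟨t₂, show t₂.sz = ℓ - _ - t₁.sz by omega⟩⟩, ?_⟩
          exact Subtype.ext rfl
        | leafT id' A a' i' h' => simp [DTree.rootP] at ht
        | leafE id' A i' h' => simp [DTree.rootP] at ht
    rw [Dp, ← Nat.card_eq_of_bijective g hg,
      nat_card_sigma (Finset.Ioo 0 (ℓ - i))
        (fun k => {t : DTree P B // t.sz = k} × {t : DTree P C // t.sz = ℓ - i - k})]
    exact Finset.sum_congr rfl fun k _ => Nat.card_prod _ _
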